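/- Let l : ℝ^p → ℝ be differentiable and let L, S ⊆ {1,…,p} be disjoint sets. If l is m-strongly concave on Ω_{|L|+|S|} with m > 0, then 0 ≤ l(β^{(L∪S)}) − l(β^{(L)}) ≤ (1/(2m)) · ‖(∇l(β^{(L)}))_S‖₂², where (∇l(β^{(L)}))_S is the gradient restricted to the coordinates in S (note that by first-order optimality of β^{(L)} the gradient coordinates in L vanish). -/

import Mathlib

/-! `β L` maximizes `l` among vectors supported in `L`, so the partial derivatives of `l` at `β L`
in the directions of `L` vanish. Both `β L` and `β (L ∪ S)` are supported in `L ∪ S`, so strong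
concavity applies to the pair and bounds the gain by `⟪∇l, d⟫ - (m/2)‖d‖²` with
`d = β (L ∪ S) - β L`. Only the coordinates in `S` contribute to `⟪∇l, d⟫`, and coordinatewise
`a g - (m/2) a² ≤ g² / (2m)`. -/

open Finset

noncomputable section

/-- Number of nonzero coordinates (the "ℓ₀ norm") of a vector. -/
def spar {p : ℕ} (v : Fin p → ℝ) : ℕ := (Finset.univ.filter fun i => v i ≠ 0).card

/-- Support of a vector, as a `Finset`. -/
def suppF {p : ℕ} (v : Fin p → ℝ) : Finset (Fin p) :=
  Finset.univ.filter fun i => v i ≠ 0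

/-- `Ω_k`: pairs of `k`-sparse vectors differing in at most `k` coordinates. -/
def Omega {p : ℕ} (k : ℕ) : Set ((Fin p → ℝ) × (Fin p → ℝ)) :=
  {q | spar q.1 ≤ k ∧ spar q.2 ≤ k ∧ spar (q.1 - q.2) ≤ k}

/-- `Ω̃_k`: pairs of `k`-sparse vectors differing in at most one coordinate. -/
def OmegaT {p : ℕ} (k : ℕ) : Set ((Fin p → ℝ) × (Fin p → ℝ)) :=
  {q | spar q.1 ≤ k ∧ spar q.2 ≤ k ∧ spar (q.1 - q.2) ≤ 1}

/-- `l` is `m`-strongly concave on `Ω`. -/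
def RStrongConcaveOn {p : ℕ} (l : (Fin p → ℝ) → ℝ) (m : ℝ)
    (Ω : Set ((Fin p → ℝ) × (Fin p → ℝ))) : Prop :=
  ∀ x y : Fin p → ℝ, (x, y) ∈ Ω →
    l y - l x - fderiv ℝ l x (y - x) ≤ -(m / 2) * ∑ i, (y i - x i) ^ 2

/-- `l` is `M`-smooth on `Ω`. -/
def RSmoothOn {p : ℕ} (l : (Fin p → ℝ) → ℝ) (M : ℝ)
    (Ω : Set ((Fin p → ℝ) × (Fin p → ℝ))) : Prop :=
  ∀ x y : Fin p → ℝ, (x, y) ∈ Ω →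
    -(M / 2) * ∑ i, (y i - x i) ^ 2 ≤ l y - l x - fderiv ℝ l x (y - x)

lemma suppF_subset_iff {p : ℕ} {v : Fin p → ℝ} {T : Finset (Fin p)} :
    suppF v ⊆ T ↔ ∀ i ∉ T, v i = 0 := by
  simp only [suppF, subset_iff, mem_filter, mem_univ, true_and]
  exact ⟨fun h i hi => by_contra fun hv => hi (h hv), fun h i hv => by_contra fun hi => hv (h i hi)⟩

lemma spar_le_card_of_suppF_subset {p : ℕ} {v : Fin p → ℝ} {T : Finset (Fin p)}
    (h : suppF v ⊆ T) : spar v ≤ #T :=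
  card_le_card h

lemma mem_Omega_of_suppF_subset {p : ℕ} {x y : Fin p → ℝ} {T : Finset (Fin p)} {k : ℕ}
    (hx : suppF x ⊆ T) (hy : suppF y ⊆ T) (hT : #T ≤ k) : (x, y) ∈ Omega k := by
  have hxy : suppF (x - y) ⊆ T := suppF_subset_iff.2 fun i hi => by
    simp [suppF_subset_iff.1 hx i hi, suppF_subset_iff.1 hy i hi]
  exact ⟨(spar_le_card_of_suppF_subset hx).trans hT, (spar_le_card_of_suppF_subset hy).trans hT,
    (spar_le_card_of_suppF_subset hxy).trans hT⟩

lemma fderiv_apply_eq_zero_of_forall_le {E : Type*} [NormedAddCommGroup E] [NormedSpace ℝ E]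
    {f : E → ℝ} {x v : E} (h : ∀ t : ℝ, f (x + t • v) ≤ f x) : fderiv ℝ f x v = 0 := by
  by_cases hf : DifferentiableAt ℝ f x
  · have hmax : IsLocalMax (fun t : ℝ => f (x + t • v)) 0 :=
      Filter.Eventually.of_forall fun t => by simpa using h t
    have hline : HasDerivAt (fun t : ℝ => f (x + t • v)) (fderiv ℝ f x v) 0 := by
      have : HasDerivAt (fun t : ℝ => x + t • v) v 0 := by
        simpa using ((hasDerivAt_id (0 : ℝ)).smul_const v).const_add x
      exact (by simpa using hf.hasFDerivAt : HasFDerivAt f (fderiv ℝ f x) (x + (0 : ℝ) • v))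
        |>.comp_hasDerivAt 0 this
    exact hline.deriv ▸ hmax.deriv_eq_zero
  · simp [fderiv_zero_of_not_differentiableAt hf]

lemma fderiv_single_eq_zero_of_isMaxOn_supported {p : ℕ} {l : (Fin p → ℝ) → ℝ}
    {x : Fin p → ℝ} {T : Finset (Fin p)} (hx : suppF x ⊆ T)
    (hmax : ∀ v, suppF v ⊆ T → l v ≤ l x) {j : Fin p} (hj : j ∈ T) :
    fderiv ℝ l x (Pi.single j 1) = 0 :=
  fderiv_apply_eq_zero_of_forall_le fun t => hmax _ <| suppF_subset_iff.2 fun i hi => by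
    simp [suppF_subset_iff.1 hx i hi, ne_of_mem_of_not_mem hj hi |>.symm]

lemma ContinuousLinearMap.apply_eq_sum_mul_single {ι : Type*} [Fintype ι] [DecidableEq ι]
    (g : (ι → ℝ) →L[ℝ] ℝ) (d : ι → ℝ) : g d = ∑ i, d i * g (Pi.single i 1) := by
  conv_lhs => rw [← LinearMap.sum_single_apply (fun _ => ℝ) d]
  rw [map_sum]
  refine sum_congr rfl fun i _ => ?_
  rw [← smul_eq_mul, ← map_smul, ← Pi.single_smul', smul_eq_mul, mul_one]

lemma mul_sub_half_mul_sq_le {m : ℝ} (hm : 0 < m) (a b : ℝ) :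
    a * b - m / 2 * a ^ 2 ≤ b ^ 2 / (2 * m) := by
  rw [le_div_iff₀ (by positivity)]
  nlinarith [sq_nonneg (b - m * a)]

lemma ContinuousLinearMap.apply_sub_half_mul_sum_sq_le {ι : Type*} [Fintype ι] [DecidableEq ι]
    (g : (ι → ℝ) →L[ℝ] ℝ) (d : ι → ℝ) {S : Finset ι}
    (hS : ∀ i ∉ S, d i * g (Pi.single i 1) = 0) {m : ℝ} (hm : 0 < m) :
    g d - m / 2 * ∑ i, d i ^ 2 ≤ 1 / (2 * m) * ∑ j ∈ S, g (Pi.single j 1) ^ 2 := by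
  have hgd : g d = ∑ i ∈ S, d i * g (Pi.single i 1) := by
    rw [g.apply_eq_sum_mul_single, sum_subset (subset_univ S) fun i _ hi => hS i hi]
  have hsq : ∑ i ∈ S, d i ^ 2 ≤ ∑ i, d i ^ 2 :=
    sum_le_univ_sum_of_nonneg fun i => sq_nonneg (d i)
  calc g d - m / 2 * ∑ i, d i ^ 2
      ≤ ∑ i ∈ S, (d i * g (Pi.single i 1) - m / 2 * d i ^ 2) := by
        rw [sum_sub_distrib, ← mul_sum, hgd]
        gcongr
    _ ≤ ∑ j ∈ S, g (Pi.single j 1) ^ 2 / (2 * m) :=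
        sum_le_sum fun i _ => mul_sub_half_mul_sq_le hm _ _
    _ = 1 / (2 * m) * ∑ j ∈ S, g (Pi.single j 1) ^ 2 := by
        rw [mul_sum]; exact sum_congr rfl fun _ _ => by ring

theorem gain_upper_bound_of_strong_concavity_general
    (p : ℕ) (l : (Fin p → ℝ) → ℝ)
    (β : Finset (Fin p) → (Fin p → ℝ))
    (hβsupp : ∀ S : Finset (Fin p), suppF (β S) ⊆ S)
    (hβmax : ∀ S : Finset (Fin p), ∀ v : Fin p → ℝ, suppF v ⊆ S → l v ≤ l (β S))
    (L S : Finset (Fin p))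
    (m : ℝ) (hm : 0 < m)
    (hconc : RStrongConcaveOn l m (Omega (L.card + S.card))) :
    0 ≤ l (β (L ∪ S)) - l (β L) ∧
      l (β (L ∪ S)) - l (β L) ≤
        1 / (2 * m) * ∑ j ∈ S, (fderiv ℝ l (β L) (Pi.single j 1)) ^ 2 := by
  have hxL : suppF (β L) ⊆ L ∪ S := (hβsupp L).trans subset_union_left
  refine ⟨sub_nonneg.2 (hβmax _ _ hxL), ?_⟩
  have hgrad_L : ∀ j ∈ L, fderiv ℝ l (β L) (Pi.single j 1) = 0 := fun j hj =>
    fderiv_single_eq_zero_of_isMaxOn_supported (hβsupp L) (hβmax L) hj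
  have hsupp_contrib : ∀ i ∉ S, (β (L ∪ S) - β L) i * fderiv ℝ l (β L) (Pi.single i 1) = 0 := by
    intro i hiS
    by_cases hiL : i ∈ L
    · rw [hgrad_L i hiL, mul_zero]
    · have hi : i ∉ L ∪ S := by simp [hiL, hiS]
      simp [suppF_subset_iff.1 (hβsupp _) i hi, suppF_subset_iff.1 hxL i hi]
  have hconc_xy := hconc _ _ (mem_Omega_of_suppF_subset hxL (hβsupp (L ∪ S)) (card_union_le L S))
  have hbound := (fderiv ℝ l (β L)).apply_sub_half_mul_sum_sq_le _ hsupp_contrib hm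
  simp only [Pi.sub_apply] at hbound
  linarith

/-- upper bound on the gain from adding a set, via strong concavity. -/
theorem gain_upper_bound_of_strong_concavity
    (p : ℕ) (l : (Fin p → ℝ) → ℝ) (hl : Differentiable ℝ l)
    (β : Finset (Fin p) → (Fin p → ℝ))
    (hβsupp : ∀ S : Finset (Fin p), suppF (β S) ⊆ S)
    (hβmax : ∀ S : Finset (Fin p), ∀ v : Fin p → ℝ, suppF v ⊆ S → l v ≤ l (β S))
    (L S : Finset (Fin p)) (hLS : Disjoint L S)
    (m : ℝ) (hm : 0 < m)
    (hconc : RStrongConcaveOn l m (Omega (L.card + S.card))) :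
    0 ≤ l (β (L ∪ S)) - l (β L) ∧
      l (β (L ∪ S)) - l (β L) ≤
        1 / (2 * m) * ∑ j ∈ S, (fderiv ℝ l (β L) (Pi.single j 1)) ^ 2 :=
  gain_upper_bound_of_strong_concavity_general p l β hβsupp hβmax L S m hm hconc
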